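/- arXiv:2101.06523 — 5 statements merged into one kernel-verified Lean document; each statement's English description precedes it below -/
import Mathlib

section
/- Let n ≥ 1 and for each i ∈ {1,…,n} let A_i, B_i, α_i > 0 be constants. Let I₁,…,I_n : [0,∞) → ℝ be continuous functions such that I := I₁ + ⋯ + I_n is absolutely continuous, and suppose that for each i ∈ {1,…,n} and for almost every t ≥ 0 with I_i(t) ≥ 0 one has I'(t) ≤ -A_i · I_i(t)^{α_i} + B_i. Then for every η > 0 there exists a time t₀ > 0 such that I(t) ≤ Σ_{i=1}^n (B_i/A_i)^{1/α_i} + η for every t ≥ t₀. -/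
/-!
Write `F = ∑ I i` and `K i = (B i / A i) ^ (1 / α i)`, so that `A i * K i ^ α i = B i`.
Whenever `F t > ∑ K i + η`, some `I i t` exceeds `K i + η / (n + 1)`, and then the hypothesis
on that component forces `F' t ≤ -c` for a constant `c > 0` independent of `t`. A function
decaying at a uniform rate while above a level reaches that level in finite time, and by
continuity it can never cross it upwards afterwards.
-/

open MeasureTheory Set

namespace AbsorbingLevel

variable {F g : ℝ → ℝ} {L c : ℝ}

lemma intervalIntegrable_of_nonneg (hg : LocallyIntegrableOn g (Ici 0)) {s t : ℝ}
    (hs : 0 ≤ s) (ht : 0 ≤ t) : IntervalIntegrable g volume s t :=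
  (hg.integrableOn_compact_subset (fun _ hu => le_trans (le_min hs ht) hu.1)
    isCompact_uIcc).intervalIntegrable

section

variable (hg : LocallyIntegrableOn g (Ici 0))
  (hF : ∀ t ∈ Ici (0 : ℝ), F t = F 0 + ∫ s in (0 : ℝ)..t, g s)
include hg hF

lemma eq_add_integral {s t : ℝ} (hs : 0 ≤ s) (ht : 0 ≤ t) :
    F t = F s + ∫ u in s..t, g u := by
  rw [hF t ht, hF s hs, ← intervalIntegral.integral_interval_sub_left
    (intervalIntegrable_of_nonneg hg le_rfl ht) (intervalIntegrable_of_nonneg hg le_rfl hs)]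
  ring

lemma continuousOn_Icc {t : ℝ} (ht : 0 ≤ t) : ContinuousOn F (Icc 0 t) := by
  have hprim : ContinuousOn (fun u => F 0 + ∫ s in (0 : ℝ)..u, g s) (uIcc 0 t) :=
    continuousOn_const.add (intervalIntegral.continuousOn_primitive_interval
      (hg.integrableOn_compact_subset (uIcc_of_le ht ▸ Icc_subset_Ici_self) isCompact_uIcc))
  rw [uIcc_of_le ht] at hprim
  exact hprim.congr fun u hu => hF u hu.1

variable (hdecay : ∀ᵐ t ∂volume.restrict (Ici 0), L < F t → g t ≤ -c)
include hdecay

lemma le_sub_mul_of_lt_on_Ioc {s t : ℝ} (hs : 0 ≤ s) (hst : s ≤ t)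
    (habove : ∀ u ∈ Ioc s t, L < F u) : F t ≤ F s - c * (t - s) := by
  have hle : g ≤ᵐ[volume.restrict (Ioc s t)] fun _ => -c := by
    rw [Filter.EventuallyLE, ae_restrict_iff' measurableSet_Ioc]
    filter_upwards [(ae_restrict_iff' measurableSet_Ici).1 hdecay] with u hu huI
    exact hu (hs.trans huI.1.le) (habove u huI)
  have hint : ∫ u in s..t, g u ≤ -c * (t - s) := by
    rw [intervalIntegral.integral_of_le hst]
    calc ∫ u in Ioc s t, g u
        ≤ ∫ _ in Ioc s t, -c := setIntegral_mono_ae_restrict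
          (intervalIntegrable_of_nonneg hg hs (hs.trans hst)).1 (integrableOn_const (by simp)) hle
      _ = -c * (t - s) := by simp [hst, mul_comm]
  linarith [eq_add_integral hg hF hs (hs.trans hst)]

lemma exists_le (hc : 0 < c) : ∃ t₁, 0 ≤ t₁ ∧ F t₁ ≤ L := by
  by_contra! habove
  set T := (F 0 - L) / c
  have hT : 0 ≤ T := div_nonneg (sub_nonneg.2 (habove 0 le_rfl).le) hc.le
  have hFT := le_sub_mul_of_lt_on_Ioc hg hF hdecay le_rfl hT fun u hu => habove u hu.1.le
  have hT_eq : F 0 - c * (T - 0) = L := by simp only [T]; field_simp; ring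
  linarith [habove T hT]

lemma forall_ge_le_of_le (hc : 0 ≤ c) {t₁ : ℝ} (ht₁ : 0 ≤ t₁) (hF₁ : F t₁ ≤ L) :
    ∀ t ≥ t₁, F t ≤ L := by
  intro t ht
  set S := Icc t₁ t ∩ {u | F u ≤ L}
  have hS_closed : IsClosed S :=
    ((continuousOn_Icc hg hF (ht₁.trans ht)).mono (Icc_subset_Icc_left ht₁))
      |>.preimage_isClosed_of_isClosed isClosed_Icc isClosed_Iic
  have hS_bdd : BddAbove S := bddAbove_Icc.mono inter_subset_left
  have hs₀ : sSup S ∈ S := hS_closed.csSup_mem ⟨t₁, ⟨le_rfl, ht⟩, hF₁⟩ hS_bdd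
  have habove : ∀ u ∈ Ioc (sSup S) t, L < F u := fun u hu => by
    by_contra! hu'
    exact hu.1.not_ge (le_csSup hS_bdd ⟨⟨hs₀.1.1.trans hu.1.le, hu.2⟩, hu'⟩)
  have hdecrease := le_sub_mul_of_lt_on_Ioc hg hF hdecay (ht₁.trans hs₀.1.1) hs₀.1.2 habove
  have hFs₀ : F (sSup S) ≤ L := hs₀.2
  nlinarith [mul_nonneg hc (sub_nonneg.2 hs₀.1.2)]

theorem exists_forall_ge_le (hc : 0 < c) : ∃ t₁, 0 ≤ t₁ ∧ ∀ t ≥ t₁, F t ≤ L := by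
  obtain ⟨t₁, ht₁, hF₁⟩ := exists_le hg hF hdecay hc
  exact ⟨t₁, ht₁, forall_ge_le_of_le hg hF hdecay hc.le ht₁ hF₁⟩

end

end AbsorbingLevel

lemma Finite.exists_pos_forall_le {ι : Type*} [Finite ι] {f : ι → ℝ} (hf : ∀ i, 0 < f i) :
    ∃ c > 0, ∀ i, c ≤ f i :=
  (Filter.Eventually.and (self_mem_nhdsWithin : ∀ᶠ c in nhdsWithin (0 : ℝ) (Ioi 0), 0 < c)
    (Filter.eventually_all.2 fun i =>
      (eventually_le_nhds (hf i)).filter_mono nhdsWithin_le_nhds)).exists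

lemma neg_mul_rpow_add_le_of_le {A B α x y : ℝ} (hA : 0 ≤ A) (hα : 0 ≤ α) (hy : 0 ≤ y)
    (hyx : y ≤ x) : -A * x ^ α + B ≤ -(A * y ^ α - B) := by
  have := mul_le_mul_of_nonneg_left (Real.rpow_le_rpow hy hyx hα) hA
  linarith

lemma lt_mul_rpow_add {A B α ε : ℝ} (hA : 0 < A) (hB : 0 ≤ B) (hα : 0 < α) (hε : 0 < ε) :
    B < A * ((B / A) ^ (1 / α) + ε) ^ α := by
  have hK : 0 ≤ (B / A) ^ (1 / α) := Real.rpow_nonneg (div_nonneg hB hA.le) _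
  calc B = A * ((B / A) ^ α⁻¹) ^ α := by
        rw [Real.rpow_inv_rpow (div_nonneg hB hA.le) hα.ne', mul_div_cancel₀ _ hA.ne']
    _ < A * ((B / A) ^ (1 / α) + ε) ^ α := by
        rw [one_div]
        exact mul_lt_mul_of_pos_left (Real.rpow_lt_rpow (by rwa [← one_div]) (by linarith) hα) hA

theorem stmt1_general (n : ℕ) (A B α : Fin n → ℝ)
    (hA : ∀ i, 0 < A i) (hB : ∀ i, 0 < B i) (hα : ∀ i, 0 < α i)
    (I : Fin n → ℝ → ℝ)
    (g : ℝ → ℝ) (hg : LocallyIntegrableOn g (Set.Ici 0))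
    (hFTC : ∀ t ∈ Set.Ici (0:ℝ), (∑ i, I i t) = (∑ i, I i 0) + ∫ s in (0:ℝ)..t, g s)
    (hineq : ∀ i, ∀ᵐ t ∂(volume.restrict (Set.Ici (0:ℝ))),
      0 ≤ I i t → g t ≤ -(A i) * (I i t) ^ (α i) + B i) :
    ∀ η > (0:ℝ), ∃ t₀ > (0:ℝ), ∀ t ≥ t₀,
      (∑ i, I i t) ≤ (∑ i, (B i / A i) ^ (1 / α i)) + η := by
  intro η hη
  set K : Fin n → ℝ := fun i => (B i / A i) ^ (1 / α i)
  set ε := η / (n + 1)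
  have hε : 0 < ε := by positivity
  have hK : ∀ i, 0 ≤ K i := fun i => Real.rpow_nonneg (div_pos (hB i) (hA i)).le _
  obtain ⟨c, hc, hcle⟩ := Finite.exists_pos_forall_le fun i =>
    sub_pos.2 (lt_mul_rpow_add (hA i) (hB i).le (hα i) hε)
  have hdecay :
      ∀ᵐ t ∂volume.restrict (Ici 0), (∑ i, K i) + η < ∑ i, I i t → g t ≤ -c := by
    filter_upwards [ae_all_iff.2 hineq] with t ht hsum
    have hthreshold : ∑ i, (K i + ε) < ∑ i, I i t := by
      have hnε : (n : ℝ) * ε < η := by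
        rw [mul_div_assoc', div_lt_iff₀ (by positivity)]; linarith
      simpa [Finset.sum_add_distrib] using (by linarith : (∑ i, K i) + n * ε < ∑ i, I i t)
    obtain ⟨i, -, hi⟩ := Finset.exists_lt_of_sum_lt hthreshold
    have hKε : 0 ≤ K i + ε := by linarith [hK i]
    calc g t ≤ -A i * I i t ^ α i + B i := ht i (hKε.trans hi.le)
      _ ≤ -(A i * (K i + ε) ^ α i - B i) :=
          neg_mul_rpow_add_le_of_le (hA i).le (hα i).le hKε hi.le
      _ ≤ -c := neg_le_neg (hcle i)
  obtain ⟨t₁, ht₁, habsorb⟩ := AbsorbingLevel.exists_forall_ge_le hg hFTC hdecay hc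
  exact ⟨t₁ + 1, by linarith, fun t ht => habsorb t (by linarith)⟩

/-- Gronwall-type Lemma 4.5 (first assertion): if `I = I₁ + ⋯ + I_n` is absolutely
continuous (encoded by `I(t) = I(0) + ∫₀ᵗ g`, where `g` is its a.e. derivative) and for each
`i` one has `I'(t) ≤ -A_i I_i(t)^{α_i} + B_i` for a.e. `t ≥ 0` with `I_i(t) ≥ 0`, then for
every `η > 0` there is `t₀ > 0` with `I(t) ≤ Σ (B_i/A_i)^{1/α_i} + η` for all `t ≥ t₀`. -/
theorem stmt1 (n : ℕ) (hn : 1 ≤ n) (A B α : Fin n → ℝ)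
    (hA : ∀ i, 0 < A i) (hB : ∀ i, 0 < B i) (hα : ∀ i, 0 < α i)
    (I : Fin n → ℝ → ℝ) (hIcont : ∀ i, ContinuousOn (I i) (Set.Ici 0))
    (g : ℝ → ℝ) (hg : LocallyIntegrableOn g (Set.Ici 0))
    (hFTC : ∀ t ∈ Set.Ici (0:ℝ), (∑ i, I i t) = (∑ i, I i 0) + ∫ s in (0:ℝ)..t, g s)
    (hineq : ∀ i, ∀ᵐ t ∂(volume.restrict (Set.Ici (0:ℝ))),
      0 ≤ I i t → g t ≤ -(A i) * (I i t) ^ (α i) + B i) :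
    ∀ η > (0:ℝ), ∃ t₀ > (0:ℝ), ∀ t ≥ t₀,
      (∑ i, I i t) ≤ (∑ i, (B i / A i) ^ (1 / α i)) + η :=
  stmt1_general n A B α hA hB hα I g hg hFTC hineq
end

section
/- Let n ≥ 1 and for each i ∈ {1,…,n} let A_i, B_i, α_i > 0 be constants, and set B = Σ_{i=1}^n (B_i/A_i)^{1/α_i}. Let {I^l}_{l∈L} be a family of functions, where each I^l = I₁^l + ⋯ + I_n^l is absolutely continuous on [0,∞) with each I_i^l continuous, and for each i and almost every t with I_i^l(t) ≥ 0 one has (I^l)'(t) ≤ -A_i · I_i^l(t)^{α_i} + B_i. Assume moreover that I^l(0) ≤ Q for every l ∈ L, where Q is a constant. Then: (a) for every η > 0 there exists t₀ > 0, independent of l, such that I^l(t) ≤ B + η for all t ≥ t₀ and all l ∈ L; and (b) there exists a constant C, depending only on Q and the constants A_i, B_i, α_i, such that I^l(t) ≤ C for every t ≥ 0 and every l ∈ L. -/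
open MeasureTheory

private lemma gron_quant {h g : ℝ → ℝ} {M δ : ℝ}
    (hgint : LocallyIntegrableOn g (Set.Ici 0))
    (hFTC : ∀ t ∈ Set.Ici (0:ℝ), h t = h 0 + ∫ s in (0:ℝ)..t, g s)
    (hae : ∀ᵐ t ∂(volume.restrict (Set.Ici (0:ℝ))), M ≤ h t → g t ≤ -δ)
    {a b : ℝ} (ha : 0 ≤ a) (hab : a ≤ b)
    (hM : ∀ u ∈ Set.Icc a b, M ≤ h u) :
    h b ≤ h a - δ * (b - a) := by
  have hb : 0 ≤ b := ha.trans hab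
  have hsub : Set.Icc a b ⊆ Set.Ici (0:ℝ) :=
    Set.Icc_subset_Ici_self.trans (Set.Ici_subset_Ici.2 ha)
  have hia : IntervalIntegrable g volume 0 a := by
    rw [intervalIntegrable_iff_integrableOn_Icc_of_le ha]
    exact hgint.integrableOn_compact_subset Set.Icc_subset_Ici_self isCompact_Icc
  have hib : IntervalIntegrable g volume 0 b := by
    rw [intervalIntegrable_iff_integrableOn_Icc_of_le hb]
    exact hgint.integrableOn_compact_subset Set.Icc_subset_Ici_self isCompact_Icc
  have hiab : IntervalIntegrable g volume a b := hia.symm.trans hib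
  have hdiff : h b - h a = ∫ s in a..b, g s := by
    rw [hFTC b hb, hFTC a ha]
    rw [add_sub_add_left_eq_sub]
    exact intervalIntegral.integral_interval_sub_left hib hia
  have hle : g ≤ᵐ[volume.restrict (Set.Icc a b)] fun _ => -δ := by
    have h1 := ae_restrict_of_ae_restrict_of_subset hsub hae
    filter_upwards [h1, ae_restrict_mem measurableSet_Icc] with u hu hmem
    exact hu (hM u hmem)
  have hbound : (∫ s in a..b, g s) ≤ ∫ _ in a..b, (-δ : ℝ) :=
    intervalIntegral.integral_mono_ae_restrict hab hiab intervalIntegrable_const hle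
  rw [intervalIntegral.integral_const, smul_eq_mul] at hbound
  linarith [hdiff ▸ hbound]

private lemma gron_invar {h g : ℝ → ℝ} {M δ : ℝ}
    (hc : ContinuousOn h (Set.Ici 0))
    (hgint : LocallyIntegrableOn g (Set.Ici 0))
    (hFTC : ∀ t ∈ Set.Ici (0:ℝ), h t = h 0 + ∫ s in (0:ℝ)..t, g s)
    (hδ : 0 ≤ δ)
    (hae : ∀ᵐ t ∂(volume.restrict (Set.Ici (0:ℝ))), M ≤ h t → g t ≤ -δ)
    {s t K : ℝ} (hs : 0 ≤ s) (hst : s ≤ t) (hMK : M ≤ K) (hhs : h s ≤ K) :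
    h t ≤ K := by
  by_contra hcon
  push_neg at hcon
  set U : Set ℝ := {u ∈ Set.Icc s t | h u ≤ K} with hU
  have hUne : U.Nonempty := ⟨s, ⟨le_rfl, hst⟩, hhs⟩
  have hUclosed : IsClosed U := by
    have : ContinuousOn h (Set.Icc s t) :=
      hc.mono (Set.Icc_subset_Ici_self.trans (Set.Ici_subset_Ici.2 hs))
    exact this.preimage_isClosed_of_isClosed isClosed_Icc isClosed_Iic
  have hUsub : U ⊆ Set.Icc s t := fun u hu => hu.1
  have hUcomp : IsCompact U := isCompact_Icc.of_isClosed_subset hUclosed hUsub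
  obtain ⟨haU1, haU2⟩ := hUcomp.sSup_mem hUne
  set a := sSup U with hadef
  have halt : a < t := lt_of_le_of_ne haU1.2 (fun he => absurd (he ▸ haU2) (not_le.2 hcon))
  have ha0 : 0 ≤ a := hs.trans haU1.1
  have key : ∀ u ∈ Set.Ioo a t, h t ≤ h u := by
    intro u hu
    have hu0 : 0 ≤ u := ha0.trans hu.1.le
    have hMle : ∀ v ∈ Set.Icc u t, M ≤ h v := by
      intro v hv
      have hvst : v ∈ Set.Icc s t := ⟨haU1.1.trans (hu.1.le.trans hv.1), hv.2⟩
      by_contra hcon2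
      push_neg at hcon2
      have hvU : v ∈ U := ⟨hvst, (hcon2.le.trans hMK)⟩
      have : v ≤ a := le_csSup hUcomp.bddAbove hvU
      linarith [hu.1.trans_le hv.1]
    have := gron_quant hgint hFTC hae hu0 hu.2.le hMle
    nlinarith [hu.2]
  have hta : Filter.Tendsto h (nhdsWithin a (Set.Ioi a)) (nhds (h a)) :=
    ((hc a ha0).mono_left (nhdsWithin_mono a (fun x hx => ha0.trans hx.le)))
  have hev : ∀ᶠ u in nhdsWithin a (Set.Ioi a), h t ≤ h u := by
    filter_upwards [Ioo_mem_nhdsGT_of_mem ⟨le_rfl, halt⟩] with u hu using key u hu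
  have : h t ≤ h a := ge_of_tendsto hta hev
  linarith

private lemma gron_reach {h g : ℝ → ℝ} {M δ : ℝ}
    (hgint : LocallyIntegrableOn g (Set.Ici 0))
    (hFTC : ∀ t ∈ Set.Ici (0:ℝ), h t = h 0 + ∫ s in (0:ℝ)..t, g s)
    (hae : ∀ᵐ t ∂(volume.restrict (Set.Ici (0:ℝ))), M ≤ h t → g t ≤ -δ)
    {T : ℝ} (hT : 0 ≤ T) (hbig : h 0 - M < δ * T) :
    ∃ s ∈ Set.Icc (0:ℝ) T, h s ≤ M := by
  by_contra hcon
  push_neg at hcon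
  have hM : ∀ u ∈ Set.Icc (0:ℝ) T, M ≤ h u := fun u hu => (hcon u hu).le
  have := gron_quant hgint hFTC hae le_rfl hT hM
  have := hcon T ⟨hT, le_rfl⟩
  nlinarith

/-- Gronwall-type Lemma 4.5 (family version): for a family `{I^l}_{l∈L}` of absolutely
continuous functions `I^l = I₁^l + ⋯ + I_n^l` (encoded by `I^l(t) = I^l(0) + ∫₀ᵗ g^l`, where
`g^l` is the a.e. derivative), each satisfying the differential inequalities
`(I^l)'(t) ≤ -A_i (I_i^l(t))^{α_i} + B_i` a.e. where `I_i^l(t) ≥ 0`, with `I^l(0) ≤ Q`: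
(a) for every `η > 0` there is `t₀ > 0` independent of `l` such that
`I^l(t) ≤ Σ (B_i/A_i)^{1/α_i} + η` for all `t ≥ t₀` and all `l`;
(b) there is a constant `C` with `I^l(t) ≤ C` for all `t ≥ 0` and all `l`. -/
theorem stmt2 (n : ℕ) (hn : 1 ≤ n) {L : Type*} (A B α : Fin n → ℝ)
    (hA : ∀ i, 0 < A i) (hB : ∀ i, 0 < B i) (hα : ∀ i, 0 < α i) (Q : ℝ)
    (I : L → Fin n → ℝ → ℝ) (hIcont : ∀ l i, ContinuousOn (I l i) (Set.Ici 0))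
    (g : L → ℝ → ℝ) (hg : ∀ l, LocallyIntegrableOn (g l) (Set.Ici 0))
    (hFTC : ∀ l, ∀ t ∈ Set.Ici (0:ℝ),
      (∑ i, I l i t) = (∑ i, I l i 0) + ∫ s in (0:ℝ)..t, g l s)
    (hineq : ∀ l, ∀ i, ∀ᵐ t ∂(volume.restrict (Set.Ici (0:ℝ))),
      0 ≤ I l i t → g l t ≤ -(A i) * (I l i t) ^ (α i) + B i)
    (hQ : ∀ l, (∑ i, I l i 0) ≤ Q) :
    (∀ η > (0:ℝ), ∃ t₀ > (0:ℝ), ∀ l, ∀ t ≥ t₀,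
        (∑ i, I l i t) ≤ (∑ i, (B i / A i) ^ (1 / α i)) + η) ∧
    (∃ C : ℝ, ∀ l, ∀ t ≥ (0:ℝ), (∑ i, I l i t) ≤ C) := by
  haveI : NeZero n := ⟨Nat.one_le_iff_ne_zero.1 hn⟩
  set c : Fin n → ℝ := fun i => (B i / A i) ^ (1 / α i) with hc
  have hcpos : ∀ i, 0 < c i := fun i => Real.rpow_pos_of_pos (div_pos (hB i) (hA i)) _
  have hAc : ∀ i, A i * (c i) ^ (α i) = B i := by
    intro i
    have hαne : α i ≠ 0 := (hα i).ne'
    have h1 : ((B i / A i) ^ (1 / α i)) ^ α i = B i / A i := by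
      rw [← Real.rpow_mul (div_pos (hB i) (hA i)).le, one_div_mul_cancel hαne,
        Real.rpow_one]
    simp only [hc, h1]
    rw [mul_comm, div_mul_cancel₀ _ (hA i).ne']
  have hScont : ∀ l, ContinuousOn (fun t => ∑ i, I l i t) (Set.Ici 0) := fun l =>
    continuousOn_finset_sum _ (fun i _ => (hIcont l i))
  have huniv : (Finset.univ : Finset (Fin n)).Nonempty := Finset.univ_nonempty
  have hnpos : (0:ℝ) < n := by exact_mod_cast hn
  have main : ∀ η > (0:ℝ), ∃ δ > (0:ℝ), ∀ l,
      ∀ᵐ t ∂(volume.restrict (Set.Ici (0:ℝ))),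
        (∑ i, c i) + η ≤ (∑ i, I l i t) → g l t ≤ -δ := by
    intro η hη
    set e : Fin n → ℝ := fun i => A i * (c i + η / n) ^ (α i) - B i with he
    have hepos : ∀ i, 0 < e i := by
      intro i
      have h2 : (c i) ^ α i < (c i + η / n) ^ α i :=
        Real.rpow_lt_rpow (hcpos i).le
          (lt_add_of_pos_right _ (div_pos hη hnpos)) (hα i)
      have h3 := hAc i
      have h4 := hA i
      simp only [he]
      nlinarith
    set δ := Finset.univ.inf' huniv e with hδdef
    have hδpos : 0 < δ := (Finset.lt_inf'_iff huniv).2 (fun i _ => hepos i)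
    refine ⟨δ, hδpos, fun l => ?_⟩
    filter_upwards [(ae_all_iff).2 (hineq l)] with t hall ht
    have hex : ∃ i, c i + η / n ≤ I l i t := by
      by_contra hcon
      push_neg at hcon
      have hsum : (∑ i, I l i t) < ∑ i, (c i + η / n) :=
        Finset.sum_lt_sum_of_nonempty huniv (fun i _ => hcon i)
      have heq : (∑ i : Fin n, (c i + η / n)) = (∑ i, c i) + η := by
        rw [Finset.sum_add_distrib, Finset.sum_const, Finset.card_univ, Fintype.card_fin,
          nsmul_eq_mul, mul_div_cancel₀ _ hnpos.ne']
      linarith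
    obtain ⟨i, hi⟩ := hex
    have hcη : 0 < c i + η / n := add_pos (hcpos i) (div_pos hη hnpos)
    have hpos : 0 ≤ I l i t := hcη.le.trans hi
    have h1 := hall i hpos
    have h2 : (c i + η / n) ^ α i ≤ (I l i t) ^ α i :=
      Real.rpow_le_rpow hcη.le hi (hα i).le
    have h3 : δ ≤ e i := Finset.inf'_le _ (Finset.mem_univ i)
    have h4 := mul_le_mul_of_nonneg_left h2 (hA i).le
    simp only [he] at h3
    linarith
  constructor
  · intro η hη
    obtain ⟨δ, hδpos, hδ⟩ := main η hη
    set M := (∑ i, c i) + η with hM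
    clear_value M
    set t₀ := max ((Q - M) / δ) 0 + 1 with ht₀
    clear_value t₀
    have ht₀0 : 0 < t₀ := by
      have := le_max_right ((Q - M) / δ) 0
      linarith
    refine ⟨t₀, ht₀0, fun l t ht => ?_⟩
    have hbig : (∑ i, I l i 0) - M < δ * t₀ := by
      have h1 : Q - M ≤ δ * max ((Q - M) / δ) 0 := by
        calc Q - M = δ * ((Q - M) / δ) := (mul_div_cancel₀ _ hδpos.ne').symm
        _ ≤ δ * max ((Q - M) / δ) 0 :=
            mul_le_mul_of_nonneg_left (le_max_left _ _) hδpos.le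
      have h2 : δ * t₀ = δ * max ((Q - M) / δ) 0 + δ := by rw [ht₀]; ring
      linarith [hQ l]
    obtain ⟨s, hs, hsM⟩ := gron_reach (h := fun t => ∑ i, I l i t) (hg l) (hFTC l)
      (hδ l) ht₀0.le hbig
    exact gron_invar (h := fun t => ∑ i, I l i t) (hScont l) (hg l) (hFTC l)
      hδpos.le (hδ l) hs.1 (hs.2.trans ht) le_rfl hsM
  · obtain ⟨δ, hδpos, hδ⟩ := main 1 one_pos
    exact ⟨max Q ((∑ i, c i) + 1), fun l t ht =>
      gron_invar (h := fun t => ∑ i, I l i t) (hScont l) (hg l) (hFTC l)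
        hδpos.le (hδ l) le_rfl ht (le_max_right _ _) ((hQ l).trans (le_max_left _ _))⟩
end

section
/- Let n ≥ 1 and for each i ∈ {1,…,n} let A_i, B_i, α_i > 0 be constants, and set B = Σ_{i=1}^n (B_i/A_i)^{1/α_i}. Let I₁,…,I_n : [0,∞) → ℝ be continuous functions such that I := I₁ + ⋯ + I_n is absolutely continuous, and suppose that for each i and almost every t with I_i(t) ≥ 0 one has I'(t) ≤ -A_i · I_i(t)^{α_i} + B_i. Then for every η > 0 and every t₀ ≥ 0: if I(t₀) ≤ B + η, then I(t) ≤ B + η for every t ≥ t₀. -/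
set_option maxHeartbeats 1000000


open MeasureTheory

/-- Positive invariance claim from the proof of the Gronwall-type Lemma 4.5: the sublevel set
`{I ≤ B + η}`, with `B = Σ (B_i/A_i)^{1/α_i}`, is forward invariant under the differential
inequalities `I'(t) ≤ -A_i I_i(t)^{α_i} + B_i` (a.e. where `I_i(t) ≥ 0`). The absolutely
continuous function `I = I₁ + ⋯ + I_n` is encoded by `I(t) = I(0) + ∫₀ᵗ g`, with `g` its
a.e. derivative. -/
theorem stmt3 (n : ℕ) (hn : 1 ≤ n) (A B α : Fin n → ℝ)
    (hA : ∀ i, 0 < A i) (hB : ∀ i, 0 < B i) (hα : ∀ i, 0 < α i)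
    (I : Fin n → ℝ → ℝ) (hIcont : ∀ i, ContinuousOn (I i) (Set.Ici 0))
    (g : ℝ → ℝ) (hg : LocallyIntegrableOn g (Set.Ici 0))
    (hFTC : ∀ t ∈ Set.Ici (0:ℝ), (∑ i, I i t) = (∑ i, I i 0) + ∫ s in (0:ℝ)..t, g s)
    (hineq : ∀ i, ∀ᵐ t ∂(volume.restrict (Set.Ici (0:ℝ))),
      0 ≤ I i t → g t ≤ -(A i) * (I i t) ^ (α i) + B i) :
    ∀ η > (0:ℝ), ∀ t₀ ≥ (0:ℝ),
      (∑ i, I i t₀) ≤ (∑ i, (B i / A i) ^ (1 / α i)) + η →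
      ∀ t ≥ t₀, (∑ i, I i t) ≤ (∑ i, (B i / A i) ^ (1 / α i)) + η := by
  intro η hη t₀ ht₀ h0 t₁ ht₁
  set c : Fin n → ℝ := fun i => (B i / A i) ^ (1 / α i) with hc
  set K : ℝ := (∑ i, c i) + η with hK
  set F : ℝ → ℝ := fun t => ∑ i, I i t with hF
  have hFcont : ContinuousOn F (Set.Ici 0) := by
    apply continuousOn_finset_sum
    intro i _
    exact hIcont i
  by_contra hcon
  push_neg at hcon
  have hc_pos : ∀ i, 0 < c i := fun i =>
    Real.rpow_pos_of_pos (div_pos (hB i) (hA i)) _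
  -- the set where F ≤ K on [t₀, t₁]
  set S : Set ℝ := Set.Icc t₀ t₁ ∩ F ⁻¹' Set.Iic K with hS
  have hSne : S.Nonempty := ⟨t₀, ⟨le_refl _, ht₁⟩, h0⟩
  have hSbdd : BddAbove S := ⟨t₁, fun x hx => hx.1.2⟩
  have hSclosed : IsClosed S := by
    apply ContinuousOn.preimage_isClosed_of_isClosed
      (hFcont.mono (Set.Icc_subset_Ici_self.trans (Set.Ici_subset_Ici.mpr ht₀)))
      isClosed_Icc isClosed_Iic
  set s := sSup S with hs
  have hsS : s ∈ S := hSclosed.csSup_mem hSne hSbdd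
  have hs_le : s ≤ t₁ := hsS.1.2
  have hs0 : (0:ℝ) ≤ s := le_trans ht₀ hsS.1.1
  have hs_lt : s < t₁ := lt_of_le_of_ne hs_le (fun h => absurd (h ▸ hsS.2) (not_le.mpr hcon))
  -- On (s, t₁], F > K
  have hgt : ∀ u, s < u → u ≤ t₁ → K < F u := by
    intro u hu hu'
    by_contra h
    push_neg at h
    have : u ∈ S := ⟨⟨le_trans hsS.1.1 hu.le, hu'⟩, h⟩
    exact absurd (le_csSup hSbdd this) (not_le.mpr hu)
  -- integrability
  have hint1 : IntervalIntegrable g volume 0 s := by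
    rw [intervalIntegrable_iff_integrableOn_Icc_of_le hs0]
    exact hg.integrableOn_compact_subset Set.Icc_subset_Ici_self isCompact_Icc
  have hint2 : IntervalIntegrable g volume s t₁ := by
    rw [intervalIntegrable_iff_integrableOn_Icc_of_le hs_le]
    exact hg.integrableOn_compact_subset
      (fun x hx => le_trans hs0 (Set.mem_Icc.mp hx).1) isCompact_Icc
  -- FTC difference
  have hdiff : F t₁ = F s + ∫ u in s..t₁, g u := by
    have h1 := hFTC t₁ (le_trans hs0 hs_le)
    have h2 := hFTC s hs0
    have hadd := intervalIntegral.integral_add_adjacent_intervals hint1 hint2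
    simp only [hF] at h1 h2 ⊢
    rw [h1, h2, ← hadd]
    ring
  -- a.e. bound on the interval
  have hae : ∀ᵐ u ∂(volume.restrict (Set.Ioc s t₁)), g u ≤ 0 := by
    have hall : ∀ᵐ u ∂(volume.restrict (Set.Ici (0:ℝ))),
        ∀ i, 0 ≤ I i u → g u ≤ -(A i) * (I i u) ^ (α i) + B i :=
      (MeasureTheory.ae_all_iff).mpr hineq
    have hsub : Set.Ioc s t₁ ⊆ Set.Ici (0:ℝ) := fun x hx => le_trans hs0 hx.1.le
    have h1 := ae_restrict_of_ae_restrict_of_subset hsub hall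
    have h2 := ae_restrict_mem (μ := volume) (measurableSet_Ioc (a := s) (b := t₁))
    filter_upwards [h1, h2] with u hu hmem
    have hFu : K < F u := hgt u hmem.1 hmem.2
    -- some coordinate exceeds c i
    have : ∃ i, c i < I i u := by
      by_contra hno
      push_neg at hno
      have : F u ≤ ∑ i, c i := Finset.sum_le_sum (fun i _ => hno i)
      linarith
    obtain ⟨i, hi⟩ := this
    have hIpos : 0 ≤ I i u := le_trans (hc_pos i).le hi.le
    have hgu := hu i hIpos
    have hpow : B i / A i < (I i u) ^ (α i) := by
      have h := Real.rpow_lt_rpow (hc_pos i).le hi (hα i)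
      have hcc : (c i) ^ (α i) = B i / A i := by
        show ((B i / A i) ^ (1 / α i)) ^ (α i) = B i / A i
        rw [← Real.rpow_mul (div_pos (hB i) (hA i)).le, one_div,
          inv_mul_cancel₀ (hα i).ne', Real.rpow_one]
      linarith
    have : -(A i) * (I i u) ^ (α i) + B i ≤ 0 := by
      have h3 : B i < A i * (I i u) ^ (α i) := by
        rw [← div_lt_iff₀' (hA i)]
        exact hpow
      nlinarith
    linarith
  have hint_nonpos : (∫ u in s..t₁, g u) ≤ 0 := by
    rw [intervalIntegral.integral_of_le hs_le]
    exact integral_nonpos_of_ae hae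
  have : F t₁ ≤ K := by
    have : F s ≤ K := hsS.2
    linarith [hdiff, hint_nonpos]
  exact absurd this (not_le.mpr hcon)
end

section
/- Let C > 0 and t₀ ∈ ℝ. Let I : [t₀,∞) → [0,∞) be absolutely continuous and let g : [t₀,∞) → [0,∞) be locally integrable, and assume that for almost every t ≥ t₀ one has I'(t) ≤ C(-I(t) + √(I(t))·g(t)). Then there exist constants C' > 0 and α > 0, depending only on C, such that for every t ≥ t₀, I(t) ≤ C'( I(t₀)·e^{-α(t-t₀)} + ( ∫_{t₀}^t e^{-α(t-s)} g(s) ds )² ). -/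
/-!
Multiplying by the integrating factor `e^{Cx}` turns the inequality into
`(e^{Cx} I)' ≤ C e^{Cx} √I g`, so `u(x) = e^{Cx/2} √(I x)` satisfies
`u(x)² ≤ u(t₀)² + ∫_{t₀}^x q u` with `q(s) = C e^{Cs/2} g(s) ≥ 0`. At a maximum point of `u` on
`[t₀, t]`, with maximum `S`, this gives `S² ≤ u(t₀)² + S ∫_{t₀}^t q`, hence `S ≤ u(t₀) + ∫_{t₀}^t q`.
Dividing by `e^{Ct/2}` yields `√I(t) ≤ e^{-C(t-t₀)/2} √I(t₀) + C ∫_{t₀}^t e^{-C(t-s)/2} g(s) ds`,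
and squaring gives the claim with `α = C/2` and `C' = 2(1 + C²)`.
-/

open MeasureTheory Set Real

theorem exp_mul_le_add_integral_of_ae_le {F i h : ℝ → ℝ} {a b c : ℝ} (hab : a ≤ b)
    (hi : IntervalIntegrable i volume a b) (hh : IntervalIntegrable h volume a b)
    (hF : ∀ x ∈ Icc a b, F x = F a + ∫ y in a..x, i y)
    (hle : ∀ᵐ x ∂volume.restrict (Icc a b), i x ≤ c * (-F x + h x)) :
    exp (c * b) * F b ≤ exp (c * a) * F a + ∫ x in a..b, c * exp (c * x) * h x := by
  set P : ℝ → ℝ := fun x => F a + ∫ y in a..x, i y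
  have hP : AbsolutelyContinuousOnInterval P a b :=
    contDiffOn_const.absolutelyContinuousOnInterval.add
      (hi.absolutelyContinuousOnInterval_intervalIntegral left_mem_uIcc)
  have hEP : AbsolutelyContinuousOnInterval (fun x => exp (c * x) * P x) a b :=
    (ContDiffOn.absolutelyContinuousOnInterval (by fun_prop)).fun_mul hP
  have hderiv : ∀ᵐ x ∂volume.restrict (Icc a b),
      deriv (fun x => exp (c * x) * P x) x ≤ c * exp (c * x) * h x := by
    have hdP : ∀ᵐ x ∂volume.restrict (Icc a b), HasDerivAt P (i x) x := by
      rw [← uIcc_of_le hab, ae_restrict_iff' measurableSet_uIcc]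
      filter_upwards [hi.ae_hasDerivAt_integral] with x hx hxab
      exact (hx hxab a left_mem_uIcc).const_add (F a)
    filter_upwards [hdP, hle, ae_restrict_mem measurableSet_Icc] with x hdPx hlex hx
    have hdE : HasDerivAt (fun x => exp (c * x)) (exp (c * x) * c) x := by
      simpa using ((hasDerivAt_id x).const_mul c).exp
    rw [(hdE.fun_mul hdPx).deriv, show P x = F x from (hF x hx).symm]
    nlinarith [mul_le_mul_of_nonneg_left hlex (exp_pos (c * x)).le]
  have hPa : P a = F a := by simp [P]
  calc exp (c * b) * F b
      = exp (c * a) * F a + ∫ x in a..b, deriv (fun x => exp (c * x) * P x) x := by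
        rw [hEP.integral_deriv_eq_sub, hPa, hF b ⟨hab, le_rfl⟩]; ring
    _ ≤ exp (c * a) * F a + ∫ x in a..b, c * exp (c * x) * h x := by
        gcongr
        exact intervalIntegral.integral_mono_ae_restrict hab hEP.intervalIntegrable_deriv
          (hh.continuousOn_mul (by fun_prop)) hderiv

theorem le_add_integral_of_sq_le_sq_add_integral_mul {u q : ℝ → ℝ} {a b A : ℝ} (hab : a ≤ b)
    (hA : 0 ≤ A) (hu : ContinuousOn u (Icc a b)) (hq : IntervalIntegrable q volume a b)
    (hq0 : ∀ x ∈ Icc a b, 0 ≤ q x)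
    (h : ∀ x ∈ Icc a b, u x ^ 2 ≤ A ^ 2 + ∫ y in a..x, q y * u y) :
    u b ≤ A + ∫ y in a..b, q y := by
  obtain ⟨z, hz, hmax⟩ := isCompact_Icc.exists_isMaxOn (nonempty_Icc.2 hab) hu
  have hB : 0 ≤ ∫ y in a..b, q y := intervalIntegral.integral_nonneg hab hq0
  have hub : u b ≤ u z := hmax ⟨hab, le_rfl⟩
  rcases lt_or_ge (u z) 0 with hneg | hS
  · linarith
  have hqz : IntervalIntegrable q volume a z :=
    hq.mono_set (uIcc_subset_uIcc left_mem_uIcc (by rw [uIcc_of_le hab]; exact hz))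
  have hIcc : Icc a z ⊆ Icc a b := Icc_subset_Icc_right hz.2
  have hsq : u z ^ 2 ≤ A ^ 2 + u z * ∫ y in a..b, q y :=
    calc u z ^ 2 ≤ A ^ 2 + ∫ y in a..z, q y * u y := h z hz
      _ ≤ A ^ 2 + ∫ y in a..z, q y * u z := by
          gcongr
          refine intervalIntegral.integral_mono_on hz.1
            (hqz.mul_continuousOn (hu.mono (by rw [uIcc_of_le hz.1]; exact hIcc)))
            (hqz.mul_const _) fun y hy => ?_
          exact mul_le_mul_of_nonneg_left (hmax (hIcc hy)) (hq0 y (hIcc hy))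
      _ ≤ A ^ 2 + u z * ∫ y in a..b, q y := by
          rw [intervalIntegral.integral_mul_const, mul_comm]
          gcongr
          exact intervalIntegral.integral_mono_interval le_rfl hz.1 hz.2
            (ae_restrict_of_forall_mem measurableSet_Ioc fun y hy => hq0 y (Ioc_subset_Icc_self hy))
            hq
  nlinarith

theorem exp_half_mul_sq (c x : ℝ) : exp (c / 2 * x) ^ 2 = exp (c * x) := by
  rw [sq, ← exp_add]; ring_nf

theorem sqrt_le_exp_mul_sqrt_add_integral {C t₀ t : ℝ} {I g i : ℝ → ℝ} (hC : 0 ≤ C)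
    (ht : t₀ ≤ t) (hI : ∀ x ∈ Icc t₀ t, 0 ≤ I x) (hg0 : ∀ x ∈ Icc t₀ t, 0 ≤ g x)
    (hg : IntervalIntegrable g volume t₀ t) (hi : IntervalIntegrable i volume t₀ t)
    (hIeq : ∀ x ∈ Icc t₀ t, I x = I t₀ + ∫ s in t₀..x, i s)
    (hle : ∀ᵐ x ∂volume.restrict (Icc t₀ t), i x ≤ C * (-I x + √(I x) * g x)) :
    √(I t) ≤ exp (-(C / 2) * (t - t₀)) * √(I t₀) +
      C * ∫ s in t₀..t, exp (-(C / 2) * (t - s)) * g s := by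
  have hIc : ContinuousOn I (Icc t₀ t) := by
    have := (hi.absolutelyContinuousOnInterval_intervalIntegral left_mem_uIcc).continuousOn
    rw [uIcc_of_le ht] at this
    exact (continuousOn_const.add this).congr hIeq
  have hIcc_sub : ∀ x ∈ Icc t₀ t, Icc t₀ x ⊆ Icc t₀ t := fun x hx => Icc_subset_Icc_right hx.2
  have huIcc_sub : ∀ x ∈ Icc t₀ t, uIcc t₀ x ⊆ uIcc t₀ t := fun x hx => by
    rw [uIcc_of_le ht, uIcc_of_le hx.1]; exact hIcc_sub x hx
  have hsq : ∀ x ∈ Icc t₀ t, (exp (C / 2 * x) * √(I x)) ^ 2 ≤ (exp (C / 2 * t₀) * √(I t₀)) ^ 2 +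
      ∫ s in t₀..x, C * exp (C / 2 * s) * g s * (exp (C / 2 * s) * √(I s)) := by
    intro x hx
    have hx₀ : t₀ ∈ Icc t₀ t := ⟨le_rfl, ht⟩
    have key := exp_mul_le_add_integral_of_ae_le hx.1 (hi.mono_set (huIcc_sub x hx))
      ((hg.continuousOn_mul (by rw [uIcc_of_le ht]; exact hIc.sqrt)).mono_set (huIcc_sub x hx))
      (fun y hy => hIeq y (hIcc_sub x hx hy))
      (ae_restrict_of_ae_restrict_of_subset (hIcc_sub x hx) hle)
    simp only [mul_pow, exp_half_mul_sq, sq_sqrt (hI x hx), sq_sqrt (hI t₀ hx₀)]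
    convert key using 3
    ext s
    rw [← exp_half_mul_sq C s]; ring
  have hbound := le_add_integral_of_sq_le_sq_add_integral_mul ht (by positivity)
    ((Continuous.continuousOn (by fun_prop)).fun_mul hIc.sqrt) (hg.continuousOn_mul (by fun_prop))
    (fun x hx => mul_nonneg (by positivity) (hg0 x hx)) hsq
  have hexp : ∀ s, exp (-(C / 2) * (t - s)) = exp (-(C / 2) * t) * exp (C / 2 * s) := fun s => by
    rw [← exp_add]; ring_nf
  calc √(I t) = exp (-(C / 2) * t) * (exp (C / 2 * t) * √(I t)) := by
        rw [← mul_assoc, ← hexp, sub_self, mul_zero, exp_zero, one_mul]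
    _ ≤ exp (-(C / 2) * t) * (exp (C / 2 * t₀) * √(I t₀) +
          ∫ s in t₀..t, C * exp (C / 2 * s) * g s) := by gcongr
    _ = exp (-(C / 2) * (t - t₀)) * √(I t₀) +
          C * ∫ s in t₀..t, exp (-(C / 2) * (t - s)) * g s := by
        simp only [hexp, mul_add, ← intervalIntegral.integral_const_mul]
        congr 1
        · ring
        · congr 1 with s; ring

/-- Analytic core of Proposition 5.1: from the differential inequality
`I'(t) ≤ C(-I(t) + √(I(t)) g(t))` (a.e., with `I` nonnegative and absolutely continuous,
encoded by `I(t) = I(t₀) + ∫_{t₀}^t i` where `i` is the a.e. derivative) one obtains, with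
constants `C' > 0` and `α > 0` depending only on `C`,
`I(t) ≤ C'(I(t₀) e^{-α(t-t₀)} + (∫_{t₀}^t e^{-α(t-s)} g(s) ds)²)`. -/
theorem stmt7 (C : ℝ) (hC : 0 < C) :
    ∃ C' > (0:ℝ), ∃ α > (0:ℝ), ∀ (t₀ : ℝ) (I g i : ℝ → ℝ),
      (∀ t ≥ t₀, 0 ≤ I t) → (∀ t ≥ t₀, 0 ≤ g t) →
      LocallyIntegrableOn g (Set.Ici t₀) →
      LocallyIntegrableOn i (Set.Ici t₀) →
      (∀ t ≥ t₀, I t = I t₀ + ∫ s in t₀..t, i s) →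
      (∀ᵐ t ∂(volume.restrict (Set.Ici t₀)),
        i t ≤ C * (-I t + Real.sqrt (I t) * g t)) →
      ∀ t ≥ t₀, I t ≤ C' * (I t₀ * Real.exp (-α * (t - t₀)) +
        (∫ s in t₀..t, Real.exp (-α * (t - s)) * g s) ^ 2) := by
  refine ⟨2 * (1 + C ^ 2), by positivity, C / 2, by positivity, ?_⟩
  intro t₀ I g i hI hg0 hg hi hIeq hle t ht
  have hint : ∀ {f : ℝ → ℝ}, LocallyIntegrableOn f (Ici t₀) → IntervalIntegrable f volume t₀ t :=
    fun hf => (intervalIntegrable_iff_integrableOn_Icc_of_le ht).2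
      (hf.integrableOn_compact_subset Icc_subset_Ici_self isCompact_Icc)
  have hsqrt := sqrt_le_exp_mul_sqrt_add_integral hC.le ht (fun x hx => hI x hx.1)
    (fun x hx => hg0 x hx.1) (hint hg) (hint hi) (fun x hx => hIeq x hx.1)
    (ae_restrict_of_ae_restrict_of_subset Icc_subset_Ici_self hle)
  set E := exp (-(C / 2) * (t - t₀))
  set J := ∫ s in t₀..t, exp (-(C / 2) * (t - s)) * g s
  have hE : E ≤ 1 := exp_le_one_iff.2 (by nlinarith)
  have hEI₀ : 0 ≤ E * I t₀ := mul_nonneg (exp_pos _).le (hI t₀ le_rfl)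
  have hI₀ : √(I t₀) ^ 2 = I t₀ := sq_sqrt (hI t₀ le_rfl)
  calc I t = √(I t) ^ 2 := (sq_sqrt (hI t ht)).symm
    _ ≤ (E * √(I t₀) + C * J) ^ 2 := pow_le_pow_left₀ (sqrt_nonneg _) hsqrt 2
    _ ≤ 2 * (E ^ 2 * I t₀) + 2 * C ^ 2 * J ^ 2 := by
        nlinarith [sq_nonneg (E * √(I t₀) - C * J)]
    _ ≤ 2 * (1 + C ^ 2) * (I t₀ * E + J ^ 2) := by
        nlinarith [mul_le_mul_of_nonneg_right hE hEI₀, mul_nonneg (sq_nonneg C) hEI₀, sq_nonneg J]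
end

section
/- Let (Ω,μ) be a finite measure space, let κ ∈ (0,5) and C > 0, and let f : ℝ → ℝ be a measurable function satisfying |f(s)| ≤ C(1+|s|^{5-κ}) for all s ∈ ℝ. Then there exists a constant C' > 0, depending only on C, κ, and μ(Ω), such that for every t ∈ [0,1] and every measurable u : (0,t) × Ω → ℝ one has ∫₀ᵗ ‖f(u(s,·))‖_{L²(μ)} ds ≤ C'(1 + ‖u‖_{L⁵(0,t;L¹⁰(Ω))}^{5-κ}) · t^{κ/5}, where both sides may equal +∞. -/
/-! Pointwise in time, the growth bound and Hölder in space give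
`‖f(u(s))‖_{L²} ≤ C (μ(Ω)^{1/2} + μ(Ω)^{κ/10} ‖u(s)‖_{L¹⁰}^{5-κ})`,
because `‖|u|^{5-κ}‖_{L²} = ‖u‖_{L^{2(5-κ)}}^{5-κ}` and `2(5-κ) ≤ 10`.
Integrating over `(0,t)`, Hölder in time with exponents `5/(5-κ)` and `5/κ` bounds
`∫₀ᵗ ‖u(s)‖_{L¹⁰}^{5-κ} ds` by `‖u‖_{L⁵L¹⁰}^{5-κ} t^{κ/5}`, and `t ≤ t^{κ/5}` on `[0,1]`
absorbs the constant term. -/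

open MeasureTheory Set
open scoped ENNReal

theorem measurable_eLpNorm_of_measurable_uncurry {β Ω E : Type*} [MeasurableSpace β]
    [MeasurableSpace Ω] {μ : Measure Ω} [SFinite μ] [NormedAddCommGroup E] [MeasurableSpace E]
    [OpensMeasurableSpace E] {u : β → Ω → E} (hu : Measurable (Function.uncurry u))
    {p : ℝ≥0∞} (hp_top : p ≠ ∞) :
    Measurable fun s => eLpNorm (u s) p μ := by
  rcases eq_or_ne p 0 with rfl | hp0
  · simp
  simp_rw [eLpNorm_eq_lintegral_rpow_enorm_toReal hp0 hp_top]
  exact ((hu.enorm.pow_const _).lintegral_prod_right').pow_const _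

theorem eLpNorm_abs_rpow_le {Ω : Type*} [MeasurableSpace Ω] {μ : Measure Ω} {v : Ω → ℝ}
    (hv : AEStronglyMeasurable v μ) {α : ℝ} (hα : 0 < α) {p q : ℝ≥0∞}
    (hpq : p * ENNReal.ofReal α ≤ q) :
    eLpNorm (fun x => |v x| ^ α) p μ ≤
      eLpNorm v q μ ^ α * μ univ ^ (1 / p.toReal - α / q.toReal) := by
  have hexp : (1 / (p * ENNReal.ofReal α).toReal - 1 / q.toReal) * α =
      1 / p.toReal - α / q.toReal := by
    rw [ENNReal.toReal_mul, ENNReal.toReal_ofReal hα.le]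
    rcases eq_or_ne p.toReal 0 with hp | hp
    · rw [hp, zero_mul, div_zero]; ring
    · field_simp
  simp_rw [← Real.norm_eq_abs]
  rw [eLpNorm_norm_rpow v hα, ← hexp, ENNReal.rpow_mul, ← ENNReal.mul_rpow_of_nonneg _ _ hα.le]
  gcongr
  exact eLpNorm_le_eLpNorm_mul_rpow_measure_univ hpq hv

theorem eLpNorm_comp_le_of_abs_le_mul_one_add_rpow {Ω : Type*} [MeasurableSpace Ω]
    {μ : Measure Ω} {f : ℝ → ℝ} {C α : ℝ} (hC : 0 ≤ C) (hα : 0 < α)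
    (hf : ∀ s, |f s| ≤ C * (1 + |s| ^ α)) {v : Ω → ℝ} (hv : AEStronglyMeasurable v μ)
    {p q : ℝ≥0∞} (hp : 1 ≤ p) (hpq : p * ENNReal.ofReal α ≤ q) :
    eLpNorm (f ∘ v) p μ ≤ ENNReal.ofReal C * (μ univ ^ (1 / p.toReal) +
      eLpNorm v q μ ^ α * μ univ ^ (1 / p.toReal - α / q.toReal)) := by
  have hconst : eLpNorm (fun _ => (1 : ℝ)) p μ ≤ μ univ ^ (1 / p.toReal) := by
    simpa using eLpNorm_le_of_ae_bound (μ := μ) (p := p) (f := fun _ => (1 : ℝ)) (C := 1)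
      (.of_forall fun _ => by simp)
  calc eLpNorm (f ∘ v) p μ ≤ eLpNorm (C • fun x => 1 + |v x| ^ α) p μ :=
        eLpNorm_mono_real fun x => by simpa using hf (v x)
    _ = ENNReal.ofReal C * eLpNorm (fun x => 1 + |v x| ^ α) p μ := by
        rw [eLpNorm_const_smul, Real.enorm_eq_ofReal hC]
    _ ≤ _ := by
        gcongr
        refine (eLpNorm_add_le aestronglyMeasurable_const ?_ hp).trans
          (add_le_add hconst (eLpNorm_abs_rpow_le hv hα hpq))
        exact (continuous_abs.rpow_const fun _ => .inr hα.le).comp_aestronglyMeasurable hv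

theorem lintegral_rpow_le_lintegral_rpow_mul_measure_univ {X : Type*} [MeasurableSpace X]
    {ν : Measure X} {g : X → ℝ≥0∞} (hg : AEMeasurable g ν) {α r : ℝ} (hα : 0 ≤ α)
    (hαr : α ≤ r) (hr : 0 < r) :
    ∫⁻ x, g x ^ α ∂ν ≤ ((∫⁻ x, g x ^ r ∂ν) ^ (1 / r)) ^ α * ν univ ^ (1 - α / r) := by
  calc ∫⁻ x, g x ^ α ∂ν = ∫⁻ x, (g x ^ r) ^ (α / r) * 1 ^ (1 - α / r) ∂ν := by
        simp_rw [ENNReal.one_rpow, mul_one, ← ENNReal.rpow_mul, mul_div_cancel₀ α hr.ne']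
    _ ≤ (∫⁻ x, g x ^ r ∂ν) ^ (α / r) * (∫⁻ _, 1 ∂ν) ^ (1 - α / r) :=
        ENNReal.lintegral_mul_norm_pow_le (hg.pow_const r) aemeasurable_const
          (div_nonneg hα hr.le) (sub_nonneg.2 ((div_le_one hr).2 hαr)) (add_sub_cancel _ 1)
    _ = ((∫⁻ x, g x ^ r ∂ν) ^ (1 / r)) ^ α * ν univ ^ (1 - α / r) := by
        rw [← ENNReal.rpow_mul, one_div_mul_eq_div, lintegral_const, one_mul]

theorem lintegral_eLpNorm_comp_le_of_abs_le_mul_one_add_rpow {β Ω : Type*}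
    [MeasurableSpace β] [MeasurableSpace Ω] {ν : Measure β} {μ : Measure Ω} [SFinite μ]
    {f : ℝ → ℝ} {C α : ℝ} (hC : 0 ≤ C) (hα : 0 < α) (hf : ∀ s, |f s| ≤ C * (1 + |s| ^ α))
    {u : β → Ω → ℝ} (hu : Measurable (Function.uncurry u)) {p q : ℝ≥0∞} (hp : 1 ≤ p)
    (hpq : p * ENNReal.ofReal α ≤ q) (hq : q ≠ ∞) {r : ℝ} (hαr : α ≤ r) :
    ∫⁻ s, eLpNorm (f ∘ u s) p μ ∂ν ≤ ENNReal.ofReal C *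
      (μ univ ^ (1 / p.toReal) * ν univ +
        ((∫⁻ s, eLpNorm (u s) q μ ^ r ∂ν) ^ (1 / r)) ^ α * ν univ ^ (1 - α / r) *
          μ univ ^ (1 / p.toReal - α / q.toReal)) := by
  have hE := measurable_eLpNorm_of_measurable_uncurry (μ := μ) hu hq
  calc ∫⁻ s, eLpNorm (f ∘ u s) p μ ∂ν
      ≤ ∫⁻ s, ENNReal.ofReal C * (μ univ ^ (1 / p.toReal) +
          eLpNorm (u s) q μ ^ α * μ univ ^ (1 / p.toReal - α / q.toReal)) ∂ν :=
        lintegral_mono fun s => eLpNorm_comp_le_of_abs_le_mul_one_add_rpow hC hα hf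
          hu.of_uncurry_left.aestronglyMeasurable hp hpq
    _ = ENNReal.ofReal C * (μ univ ^ (1 / p.toReal) * ν univ +
          (∫⁻ s, eLpNorm (u s) q μ ^ α ∂ν) * μ univ ^ (1 / p.toReal - α / q.toReal)) := by
        rw [lintegral_const_mul' _ _ ENNReal.ofReal_ne_top,
          lintegral_add_left measurable_const,
          lintegral_mul_const'' _ (hE.pow_const α).aemeasurable, lintegral_const]
    _ ≤ _ := by
        gcongr
        exact lintegral_rpow_le_lintegral_rpow_mul_measure_univ hE.aemeasurable hα.le hαr
          (hα.trans_le hαr)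

theorem stmt13_general {Ω : Type*} [MeasurableSpace Ω] (μ : Measure Ω) [IsFiniteMeasure μ]
    (κ C : ℝ) (hκ : 0 < κ) (hκ5 : κ < 5) (hC : 0 < C)
    (f : ℝ → ℝ)
    (hgrowth : ∀ s : ℝ, |f s| ≤ C * (1 + |s| ^ ((5:ℝ) - κ))) :
    ∃ C' > (0:ℝ), ∀ t ∈ Set.Icc (0:ℝ) 1, ∀ u : ℝ → Ω → ℝ,
      Measurable (Function.uncurry u) →
      (∫⁻ s in Set.Ioo (0:ℝ) t, eLpNorm (f ∘ u s) 2 μ) ≤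
        ENNReal.ofReal C' *
          (1 + ((∫⁻ s in Set.Ioo (0:ℝ) t,
              (eLpNorm (u s) 10 μ) ^ (5:ℝ)) ^ ((1:ℝ)/5)) ^ ((5:ℝ) - κ)) *
          ENNReal.ofReal (t ^ (κ / 5)) := by
  set A := μ univ
  refine ⟨C * (A.toReal ^ (1 / 2 : ℝ) + A.toReal ^ (κ / 10) + 1), by positivity, ?_⟩
  rintro t ⟨ht0, ht1⟩ u hu
  have hpq : (2 : ℝ≥0∞) * ENNReal.ofReal (5 - κ) ≤ 10 := by
    rw [← ENNReal.ofReal_ofNat, ← ENNReal.ofReal_mul zero_le_two, ← ENNReal.ofReal_ofNat]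
    exact ENNReal.ofReal_le_ofReal (by linarith)
  have hbound := lintegral_eLpNorm_comp_le_of_abs_le_mul_one_add_rpow
    (ν := volume.restrict (Ioo 0 t)) (μ := μ) (p := 2) (q := 10) (r := 5)
    hC.le (by linarith) hgrowth hu one_le_two hpq (by norm_num) (by linarith)
  have hexp₁ : (1 : ℝ) / 2 - (5 - κ) / 10 = κ / 10 := by ring
  have hexp₂ : 1 - (5 - κ) / 5 = κ / 5 := by ring
  rw [ENNReal.toReal_ofNat, ENNReal.toReal_ofNat, hexp₁, hexp₂, Measure.restrict_apply_univ,
    Real.volume_Ioo, sub_zero, ENNReal.ofReal_rpow_of_nonneg ht0 (by positivity)] at hbound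
  set T := ENNReal.ofReal (t ^ (κ / 5))
  set K := A ^ (1 / 2 : ℝ) + A ^ (κ / 10) + 1
  have htT : ENNReal.ofReal t ≤ T :=
    ENNReal.ofReal_le_ofReal (Real.self_le_rpow_of_le_one ht0 ht1 (by linarith))
  have hC' : ENNReal.ofReal (C * (A.toReal ^ (1 / 2 : ℝ) + A.toReal ^ (κ / 10) + 1)) =
      ENNReal.ofReal C * K := by
    rw [ENNReal.ofReal_mul hC.le, ENNReal.ofReal_add (by positivity) zero_le_one,
      ENNReal.ofReal_add (by positivity) (by positivity), ENNReal.ofReal_one,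
      ← ENNReal.ofReal_rpow_of_nonneg ENNReal.toReal_nonneg (by norm_num),
      ← ENNReal.ofReal_rpow_of_nonneg ENNReal.toReal_nonneg (by positivity),
      ENNReal.ofReal_toReal (measure_ne_top μ univ)]
  rw [hC']
  calc _ ≤ _ := hbound
    _ ≤ ENNReal.ofReal C * (K * T + _ * T * K) := by
        gcongr
        · exact le_add_right le_self_add
        · exact le_add_right le_add_self
    _ = _ := by ring

/-- Time-integrated nonlinearity estimate from the proof of Lemma 5.9: on a finite measure
space, if `|f(s)| ≤ C(1+|s|^{5-κ})`, then for every `t ∈ [0,1]` and every measurable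
`u : (0,t) × Ω → ℝ`,
`∫₀ᵗ ‖f(u(s,·))‖_{L²(μ)} ds ≤ C'(1 + ‖u‖_{L⁵(0,t;L¹⁰)}^{5-κ}) t^{κ/5}`, with `C'`
depending only on `C`, `κ` and `μ(Ω)`; both sides (values in `ℝ≥0∞`) may be infinite. -/
theorem stmt13 {Ω : Type*} [MeasurableSpace Ω] (μ : Measure Ω) [IsFiniteMeasure μ]
    (κ C : ℝ) (hκ : 0 < κ) (hκ5 : κ < 5) (hC : 0 < C)
    (f : ℝ → ℝ) (hf : Measurable f)
    (hgrowth : ∀ s : ℝ, |f s| ≤ C * (1 + |s| ^ ((5:ℝ) - κ))) :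
    ∃ C' > (0:ℝ), ∀ t ∈ Set.Icc (0:ℝ) 1, ∀ u : ℝ → Ω → ℝ,
      Measurable (Function.uncurry u) →
      (∫⁻ s in Set.Ioo (0:ℝ) t, eLpNorm (f ∘ u s) 2 μ) ≤
        ENNReal.ofReal C' *
          (1 + ((∫⁻ s in Set.Ioo (0:ℝ) t,
              (eLpNorm (u s) 10 μ) ^ (5:ℝ)) ^ ((1:ℝ)/5)) ^ ((5:ℝ) - κ)) *
          ENNReal.ofReal (t ^ (κ / 5)) :=
  stmt13_general μ κ C hκ hκ5 hC f hgrowth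
end
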